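/- Suppose 0 < α < γ. For every n ≥ 2 the infimum I_n = inf E_n over (ℝ^d)^n is attained by some configuration (x_1,…,x_n). -/

import Mathlib

open Finset Filter

noncomputable def En (d n : ℕ) (α γ : ℝ) (x : Fin n → EuclideanSpace ℝ (Fin d)) : ℝ :=
  ∑ i, ∑ j, if i = j then 0 else ‖x i - x j‖ ^ γ / γ - ‖x i - x j‖ ^ α / α

/-!
The pair potential `w(r) = r^γ/γ - r^α/α` is bounded below by `w(1)` and tends to `+∞`, so a
configuration with two points far apart has energy at least `w(far) + (n² - 1) w(1) ≥ 0 = E_n(0)`.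
Since `E_n` is translation invariant, it suffices to minimise over configurations with `x 0 = 0`
lying in a large compact ball.
-/

noncomputable def pairPotential (α γ r : ℝ) : ℝ := r ^ γ / γ - r ^ α / α

section pairPotential

variable {α γ : ℝ}

lemma pairPotential_zero (hα : α ≠ 0) (hγ : γ ≠ 0) : pairPotential α γ 0 = 0 := by
  simp [pairPotential, Real.zero_rpow hα, Real.zero_rpow hγ]

/-- Weighted AM-GM: `r^α = (r^γ)^(α/γ) · 1^(1-α/γ) ≤ (α/γ) r^γ + (1 - α/γ)`. -/
lemma pairPotential_one_le (hα : 0 < α) (h : α < γ) {r : ℝ} (hr : 0 ≤ r) :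
    pairPotential α γ 1 ≤ pairPotential α γ r := by
  have hγ : 0 < γ := hα.trans h
  have hamgm := Real.geom_mean_le_arith_mean2_weighted (div_nonneg hα.le hγ.le)
    (sub_nonneg.2 ((div_le_one hγ).2 h.le)) (Real.rpow_nonneg hr γ) zero_le_one
    (add_sub_cancel (α / γ) 1)
  rw [← Real.rpow_mul hr, mul_div_cancel₀ α hγ.ne', Real.one_rpow, mul_one, mul_one] at hamgm
  have hsub : r ^ α / α ≤ r ^ γ / γ + (1 / α - 1 / γ) := by
    rw [div_le_iff₀ hα]
    calc r ^ α ≤ α / γ * r ^ γ + (1 - α / γ) := hamgm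
      _ = (r ^ γ / γ + (1 / α - 1 / γ)) * α := by field_simp
  simp only [pairPotential, Real.one_rpow]
  linarith

lemma tendsto_pairPotential_atTop (hα : 0 < α) (h : α < γ) :
    Tendsto (pairPotential α γ) atTop atTop := by
  have hγ : 0 < γ := hα.trans h
  have hprod : Tendsto (fun r : ℝ => r ^ α * (r ^ (γ - α) / γ - 1 / α)) atTop atTop :=
    (tendsto_rpow_atTop hα).atTop_mul_atTop₀ <| tendsto_atTop_add_const_right _ _
      ((tendsto_rpow_atTop (sub_pos.2 h)).atTop_div_const hγ)
  refine hprod.congr' ?_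
  filter_upwards [eventually_gt_atTop 0] with r hr
  rw [pairPotential, mul_sub, ← mul_div_assoc, ← Real.rpow_add hr, add_sub_cancel, mul_one_div]

end pairPotential

section En

variable {d n : ℕ} {α γ : ℝ}

lemma En_eq_sum_pairPotential (hα : α ≠ 0) (hγ : γ ≠ 0) (x : Fin n → EuclideanSpace ℝ (Fin d)) :
    En d n α γ x = ∑ i, ∑ j, pairPotential α γ ‖x i - x j‖ := by
  refine sum_congr rfl fun i _ => sum_congr rfl fun j _ => ?_
  split_ifs with hij
  · rw [hij, sub_self, norm_zero, pairPotential_zero hα hγ]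
  · rfl

lemma En_zero (hα : α ≠ 0) (hγ : γ ≠ 0) : En d n α γ 0 = 0 := by
  simp [En_eq_sum_pairPotential hα hγ, pairPotential_zero hα hγ]

lemma En_sub_const (hα : α ≠ 0) (hγ : γ ≠ 0) (x : Fin n → EuclideanSpace ℝ (Fin d))
    (v : EuclideanSpace ℝ (Fin d)) : En d n α γ (fun i => x i - v) = En d n α γ x := by
  simp only [En_eq_sum_pairPotential hα hγ, sub_sub_sub_cancel_right]

lemma continuous_En (hα : 0 < α) (hγ : 0 < γ) : Continuous (En d n α γ) := by
  simp only [funext (En_eq_sum_pairPotential (d := d) (n := n) hα.ne' hγ.ne'), pairPotential]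
  fun_prop (disch := positivity)

/-- Each of the `n²` pair terms, the diagonal ones included, is at least `w(1)`. -/
lemma pairPotential_add_le_En (hα : 0 < α) (h : α < γ) (x : Fin n → EuclideanSpace ℝ (Fin d))
    (i j : Fin n) :
    pairPotential α γ ‖x i - x j‖ + ((n : ℝ) ^ 2 - 1) * pairPotential α γ 1 ≤ En d n α γ x := by
  set m := pairPotential α γ 1
  set f : Fin n → Fin n → ℝ := fun i j => pairPotential α γ ‖x i - x j‖ - m
  have hf : ∀ i j, 0 ≤ f i j := fun i j =>
    sub_nonneg.2 (pairPotential_one_le hα h (norm_nonneg _))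
  have hsingle : f i j ≤ ∑ i, ∑ j, f i j :=
    (single_le_sum (fun j _ => hf i j) (mem_univ j)).trans
      (single_le_sum (fun i _ => sum_nonneg fun j _ => hf i j) (mem_univ i))
  have hsum : ∑ i, ∑ j, f i j = En d n α γ x - (n : ℝ) ^ 2 * m := by
    simp only [f, sum_sub_distrib, sum_const, card_univ, Fintype.card_fin, nsmul_eq_mul,
      En_eq_sum_pairPotential hα.ne' (hα.trans h).ne']
    ring
  linarith

end En

theorem stmt_4 (d n : ℕ) (hn : 2 ≤ n) (α γ : ℝ) (hα : 0 < α) (h : α < γ) :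
    ∃ x : Fin n → EuclideanSpace ℝ (Fin d),
      ∀ y : Fin n → EuclideanSpace ℝ (Fin d), En d n α γ x ≤ En d n α γ y := by
  have : NeZero n := ⟨by omega⟩
  have hγ : 0 < γ := hα.trans h
  obtain ⟨R, hR⟩ := eventually_atTop.1 <| (tendsto_pairPotential_atTop hα h).eventually_ge_atTop
    (-(((n : ℝ) ^ 2 - 1) * pairPotential α γ 1))
  obtain ⟨x, -, hx⟩ := (isCompact_closedBall (0 : Fin n → EuclideanSpace ℝ (Fin d)) |R|).exists_isMinOn
    ⟨0, Metric.mem_closedBall_self (abs_nonneg R)⟩ (continuous_En hα hγ).continuousOn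
  refine ⟨x, fun y => ?_⟩
  by_cases hy : ∀ i, ‖y i - y 0‖ ≤ |R|
  · rw [← En_sub_const hα.ne' hγ.ne' y (y 0)]
    exact hx (mem_closedBall_zero_iff.2 ((pi_norm_le_iff_of_nonneg (abs_nonneg R)).2 hy))
  · obtain ⟨i, hi⟩ := not_forall.1 hy
    calc En d n α γ x ≤ En d n α γ 0 := hx (Metric.mem_closedBall_self (abs_nonneg R))
      _ = 0 := En_zero hα.ne' hγ.ne'
      _ ≤ En d n α γ y := by
        have := hR _ ((le_abs_self R).trans (not_le.1 hi).le)
        linarith [pairPotential_add_le_En hα h y i 0]
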